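/- arXiv:1507.08338 — 3 statements merged into one kernel-verified Lean document; each statement's English description precedes it below -/
import Mathlib

section
/- Let x ≥ 2 be an integer and let m be an integer with 4x² − x ≤ m ≤ 4x² + 3x − 3. Then the pseudoachromatic index of the complete graph K_m satisfies ψ(m) ≤ 2x(m−x−1); equivalently, there is no complete edge-colouring of K_m with 2x(m−x−1)+1 colours. -/
/-- A complete edge-colouring of the complete graph `K_m` with `k` colours:
every colour appears on some edge, and every two distinct colours appear
on two edges sharing a common vertex. -/
def IsCompleteEdgeColouring {m k : ℕ} (Γ : Sym2 (Fin m) → Fin k) : Prop :=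
  (∀ c : Fin k, ∃ x y : Fin m, x ≠ y ∧ Γ s(x, y) = c) ∧
  (∀ c₁ c₂ : Fin k, c₁ ≠ c₂ →
    ∃ x y z : Fin m, x ≠ y ∧ x ≠ z ∧ Γ s(x, y) = c₁ ∧ Γ s(x, z) = c₂)

/-- The pseudoachromatic index of the complete graph `K_m`: the largest number of
colours in a complete edge-colouring of `K_m`. -/
noncomputable def pseudoachromaticIndex (m : ℕ) : ℕ :=
  sSup {k : ℕ | ∃ Γ : Sym2 (Fin m) → Fin k, IsCompleteEdgeColouring Γ}

/-!
Put `k = 2x(m - x - 1) + 1`. A colour class with `t` edges spans at most `2t` vertices, and every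
other colour occurs on an edge meeting that span, so `k - 1 + t ≤ C(m, 2) - C(m - 2t, 2)`.
For `m` in the given range this forces `t ≥ x`, and for a tight class (`t = x`) it forces equality:
the class spans exactly `2x` vertices and each other colour occurs exactly once next to it.
Hence two tight classes share exactly one vertex. Counting edges there are more than
`2x(2x - 1) + 1` tight classes, and so many `2x`-sets pairwise meeting in one point all pass
through a common point; their spans with that point removed are then disjoint, which needs more
than `m` vertices.
-/

open Finset

namespace Finset

variable {ι α : Type*} [DecidableEq α] {s : ι → Finset α} {F : Finset ι} {n : ℕ}

lemma eq_of_mem_inter_of_card_eq_one {t u : Finset α} (h : #(t ∩ u) = 1) {a b : α}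
    (ha : a ∈ t ∩ u) (hb : b ∈ t ∩ u) : a = b :=
  card_le_one.mp h.le a ha b hb

theorem exists_mem_of_pairwise_card_inter_eq_one (hcard : ∀ i ∈ F, #(s i) = n)
    (hinter : ∀ i ∈ F, ∀ j ∈ F, i ≠ j → #(s i ∩ s j) = 1) (hF : n * (n - 1) + 1 < #F) :
    ∃ p, ∀ i ∈ F, p ∈ s i := by
  classical
  obtain ⟨i₀, hi₀⟩ : F.Nonempty := card_pos.mp (by omega)
  have hmeet : ∀ j ∈ F.erase i₀, ∃ q, s i₀ ∩ s j = {q} := fun j hj =>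
    card_eq_one.mp (hinter i₀ hi₀ j (mem_erase.1 hj).2 (mem_erase.1 hj).1.symm)
  have : Nonempty α := by
    obtain ⟨j, hj⟩ : (F.erase i₀).Nonempty := card_pos.mp (by rw [card_erase_of_mem hi₀]; omega)
    obtain ⟨q, -⟩ := hmeet j hj
    exact ⟨q⟩
  choose! f hf using hmeet
  have hmaps : ∀ j ∈ F.erase i₀, f j ∈ s i₀ := fun j hj =>
    (mem_inter.1 (hf j hj ▸ mem_singleton_self (f j))).1
  obtain ⟨p, hp, hfib⟩ := exists_lt_card_fiber_of_mul_lt_card_of_maps_to hmaps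
    (n := n - 1) (by rw [hcard i₀ hi₀, card_erase_of_mem hi₀]; omega)
  set G := insert i₀ {j ∈ F.erase i₀ | f j = p}
  have hGF : G ⊆ F := insert_subset hi₀ ((filter_subset _ _).trans (erase_subset _ _))
  have hGp : ∀ i ∈ G, p ∈ s i := by
    simp only [G, mem_insert, mem_filter]
    rintro i (rfl | ⟨hi, rfl⟩)
    · exact hp
    · exact (mem_inter.1 (hf i hi ▸ mem_singleton_self (f i))).2
  have hGcard : n < #G := by
    rw [card_insert_of_notMem (by simp)]; omega
  refine ⟨p, fun j hj => ?_⟩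
  by_contra hpj
  -- each member of `G` meets `s j` in a point of its own, since it already meets the others in `p`
  have hmeet' : ∀ i ∈ G, ∃ q, s i ∩ s j = {q} := fun i hi =>
    card_eq_one.mp (hinter i (hGF hi) j hj (by rintro rfl; exact hpj (hGp i hi)))
  choose! g hg using hmeet'
  have hgj : ∀ i ∈ G, g i ∈ s i ∩ s j := fun i hi => hg i hi ▸ mem_singleton_self (g i)
  have hinj : Set.InjOn g G := by
    intro i₁ hi₁ i₂ hi₂ heq
    by_contra hne
    have hq := hgj i₁ hi₁
    have hq' := hgj i₂ hi₂
    have : g i₁ = p := eq_of_mem_inter_of_card_eq_one (hinter i₁ (hGF hi₁) i₂ (hGF hi₂) hne)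
      (mem_inter.2 ⟨(mem_inter.1 hq).1, heq ▸ (mem_inter.1 hq').1⟩)
      (mem_inter.2 ⟨hGp i₁ hi₁, hGp i₂ hi₂⟩)
    exact hpj (this ▸ (mem_inter.1 hq).2)
  have := card_le_card_of_injOn g (fun i hi => (mem_inter.1 (hgj i hi)).2) hinj
  rw [hcard j hj] at this
  omega

theorem card_mul_pred_le_of_pairwise_card_inter_eq_one [Fintype α] (hcard : ∀ i ∈ F, #(s i) = n)
    (hinter : ∀ i ∈ F, ∀ j ∈ F, i ≠ j → #(s i ∩ s j) = 1) (hF : n * (n - 1) + 1 < #F) :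
    #F * (n - 1) ≤ Fintype.card α := by
  obtain ⟨p, hp⟩ := exists_mem_of_pairwise_card_inter_eq_one hcard hinter hF
  have hdisj : (F : Set ι).PairwiseDisjoint fun i => (s i).erase p := by
    intro i hi j hj hij
    refine disjoint_left.2 fun q hqi hqj => (mem_erase.1 hqi).1 ?_
    exact eq_of_mem_inter_of_card_eq_one (hinter i hi j hj hij)
      (mem_inter.2 ⟨(mem_erase.1 hqi).2, (mem_erase.1 hqj).2⟩) (mem_inter.2 ⟨hp i hi, hp j hj⟩)
  calc #F * (n - 1) = ∑ i ∈ F, #((s i).erase p) := by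
        rw [sum_congr rfl fun i hi => by rw [card_erase_of_mem (hp i hi), hcard i hi], sum_const,
          smul_eq_mul]
    _ = #(F.biUnion fun i => (s i).erase p) := (card_biUnion hdisj).symm
    _ ≤ Fintype.card α := card_le_univ _

lemma mul_card_le_sum_add_card_filter_eq (t : Finset ι) (f : ι → ℕ) {x : ℕ}
    (h : ∀ i ∈ t, x ≤ f i) : (x + 1) * #t ≤ ∑ i ∈ t, f i + #{i ∈ t | f i = x} := by
  rw [card_filter, ← sum_add_distrib, mul_comm, ← smul_eq_mul, ← sum_const]
  refine sum_le_sum fun i hi => ?_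
  have := h i hi
  split_ifs <;> omega

end Finset

lemma card_filter_not_isDiag_sym2 {α : Type*} [DecidableEq α] (s : Finset α) :
    #{e ∈ s.sym2 | ¬ e.IsDiag} = (#s).choose 2 := by
  rw [sym2_eq_image, Sym2.filter_image_mk_not_isDiag, Sym2.card_image_offDiag]

lemma card_filter_exists_mem_add_choose_two {V : Type*} [Fintype V] [DecidableEq V]
    (U : Finset V) :
    #{e : Sym2 V | ¬ e.IsDiag ∧ ∃ v ∈ U, v ∈ e} + (Fintype.card V - #U).choose 2 =
      (Fintype.card V).choose 2 := by
  have hsplit := card_filter_add_card_filter_not (s := ({e : Sym2 V | ¬ e.IsDiag} : Finset _))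
    (p := fun e => ∃ v ∈ U, v ∈ e)
  rw [← card_compl, ← card_filter_not_isDiag_sym2, ← Sym2.card_subtype_not_diag,
    Fintype.card_subtype, ← hsplit]
  congr 2
  · rw [filter_filter]
  · ext e
    simp only [mem_filter, mem_univ, true_and, mem_sym2_iff, mem_compl]
    grind

lemma choose_two_eq_of_two_mul_le {m x : ℕ} (h : 2 * x ≤ m) :
    m.choose 2 = 2 * x * (m - x - 1) + x + (m - 2 * x).choose 2 := by
  rcases Nat.eq_zero_or_pos x with rfl | hx
  · simp
  obtain ⟨a, rfl⟩ := Nat.exists_eq_add_of_le h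
  obtain ⟨y, rfl⟩ := Nat.exists_eq_add_of_lt hx
  rw [show 2 * (0 + y + 1) + a - (0 + y + 1) - 1 = y + a by omega, Nat.add_sub_cancel_left]
  apply Nat.cast_injective (R := ℚ)
  push_cast [Nat.cast_choose_two]
  ring

lemma le_and_eq_of_add_choose_two_le {m x t s : ℕ} (hm : 3 * x ≤ m) (hs : s ≤ 2 * t)
    (h : t + (m - s).choose 2 ≤ x + (m - 2 * x).choose 2) : x ≤ t ∧ (t = x → s = 2 * x) := by
  have hsucc (n : ℕ) : (n + 1).choose 2 = n.choose 2 + n := by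
    rw [Nat.choose_succ_succ', Nat.choose_one_right, add_comm]
  constructor
  · by_contra! ht
    have := Nat.choose_le_choose 2 (show m - 2 * x + 1 + 1 ≤ m - s by omega)
    rw [hsucc, hsucc] at this
    omega
  · rintro rfl
    by_contra hs'
    have := Nat.choose_le_choose 2 (show m - 2 * t + 1 ≤ m - s by omega)
    rw [hsucc] at this
    omega

lemma two_mul_choose_two (n : ℕ) : 2 * n.choose 2 = n * (n - 1) := by
  rw [Nat.choose_two_right, Nat.mul_div_cancel' (Nat.even_mul_pred_self n).two_dvd]

lemma lt_of_succ_mul_le_choose_two_add {x m τ : ℕ} (hx : 2 ≤ x) (h1 : 4 * x ^ 2 - x ≤ m)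
    (h2 : m ≤ 4 * x ^ 2 + 3 * x - 3)
    (h : (x + 1) * (2 * x * (m - x - 1) + 1) ≤ m.choose 2 + τ) : 2 * x * (2 * x - 1) + 1 < τ := by
  have h2c := two_mul_choose_two m
  have : 2 * x ≤ x ^ 2 := by nlinarith
  obtain ⟨e, rfl⟩ : ∃ e, m = x + 1 + e := ⟨m - x - 1, by omega⟩
  simp only [show x + 1 + e - x - 1 = e by omega, show x + 1 + e - 1 = x + e by omega] at h h2c
  have hlo : 4 * x ^ 2 ≤ 2 * x + 1 + e := by omega
  have hhi : x + e + 4 ≤ 4 * x ^ 2 + 3 * x := by omega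
  zify [show 1 ≤ 2 * x by omega] at *
  nlinarith

section Colouring

variable {m k : ℕ} (Γ : Sym2 (Fin m) → Fin k)

def colourClass (c : Fin k) : Finset (Sym2 (Fin m)) := {e | ¬ e.IsDiag ∧ Γ e = c}

def colourSupport (c : Fin k) : Finset (Fin m) := (colourClass Γ c).biUnion Sym2.toFinset

def adjacentEdges (c : Fin k) : Finset (Sym2 (Fin m)) :=
  {e | ¬ e.IsDiag ∧ (∃ v ∈ colourSupport Γ c, v ∈ e) ∧ Γ e ≠ c}

variable {Γ}

lemma mem_colourClass {c : Fin k} {e : Sym2 (Fin m)} :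
    e ∈ colourClass Γ c ↔ ¬ e.IsDiag ∧ Γ e = c := by
  simp [colourClass]

lemma mem_colourSupport {c : Fin k} {v : Fin m} :
    v ∈ colourSupport Γ c ↔ ∃ e ∈ colourClass Γ c, v ∈ e := by
  simp [colourSupport]

lemma left_mem_colourSupport {c : Fin k} {v w : Fin m} (hvw : v ≠ w) (hc : Γ s(v, w) = c) :
    v ∈ colourSupport Γ c :=
  mem_colourSupport.2 ⟨s(v, w), mem_colourClass.2 ⟨by simpa using hvw, hc⟩, Sym2.mem_mk_left v w⟩

variable (Γ)

lemma sum_card_colourClass : ∑ c, #(colourClass Γ c) = m.choose 2 := by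
  have h := Sym2.card_subtype_not_diag (α := Fin m)
  rw [Fintype.card_fin, Fintype.card_subtype] at h
  rw [← h, card_eq_sum_card_fiberwise (f := Γ) (t := univ) (fun _ _ => mem_coe.2 (mem_univ _))]
  simp only [colourClass, filter_filter]

lemma card_colourSupport_le (c : Fin k) : #(colourSupport Γ c) ≤ 2 * #(colourClass Γ c) := by
  calc #(colourSupport Γ c) ≤ ∑ e ∈ colourClass Γ c, #e.toFinset := card_biUnion_le
    _ = ∑ _e ∈ colourClass Γ c, 2 := sum_congr rfl fun e he =>
        Sym2.card_toFinset_of_not_isDiag e (mem_colourClass.1 he).1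
    _ = 2 * #(colourClass Γ c) := by rw [sum_const, smul_eq_mul, mul_comm]

lemma card_adjacentEdges_add (c : Fin k) :
    #(adjacentEdges Γ c) + #(colourClass Γ c) + (m - #(colourSupport Γ c)).choose 2 =
      m.choose 2 := by
  have h := card_filter_exists_mem_add_choose_two (colourSupport Γ c)
  rw [Fintype.card_fin, ← card_filter_add_card_filter_not (p := fun e => Γ e ≠ c)] at h
  rw [← h]
  congr 3
  · ext e; simp [adjacentEdges, and_assoc]
  · ext e
    simp only [mem_filter, mem_univ, true_and, not_not, mem_colourClass]
    refine ⟨fun h => ⟨⟨h.1, e.out.1, ?_, Sym2.out_fst_mem e⟩, h.2⟩, fun h => ⟨h.1.1, h.2⟩⟩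
    exact mem_colourSupport.2 ⟨e, mem_colourClass.2 h, Sym2.out_fst_mem e⟩

variable {Γ}

lemma mem_adjacentEdges {c : Fin k} {e : Sym2 (Fin m)} :
    e ∈ adjacentEdges Γ c ↔ ¬ e.IsDiag ∧ (∃ v ∈ colourSupport Γ c, v ∈ e) ∧ Γ e ≠ c := by
  simp [adjacentEdges]

lemma eq_of_mem_colourSupport_inter {c c' : Fin k} (hinj : Set.InjOn Γ (adjacentEdges Γ c))
    (hcc' : c ≠ c') {u v : Fin m} (huv : u ≠ v) (hu : u ∈ colourSupport Γ c ∩ colourSupport Γ c')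
    (hv : v ∈ colourSupport Γ c ∩ colourSupport Γ c') : Γ s(u, v) = c' := by
  obtain ⟨eu, heu, hueu⟩ := mem_colourSupport.1 (mem_inter.1 hu).2
  obtain ⟨ev, hev, hvev⟩ := mem_colourSupport.1 (mem_inter.1 hv).2
  have hadj {w : Fin m} {e : Sym2 (Fin m)} (hw : w ∈ colourSupport Γ c)
      (he : e ∈ colourClass Γ c') (hwe : w ∈ e) : e ∈ adjacentEdges Γ c :=
    mem_adjacentEdges.2
      ⟨(mem_colourClass.1 he).1, ⟨w, hw, hwe⟩, (mem_colourClass.1 he).2 ▸ hcc'.symm⟩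
  have heq : eu = ev := hinj (hadj (mem_inter.1 hu).1 heu hueu) (hadj (mem_inter.1 hv).1 hev hvev)
    ((mem_colourClass.1 heu).2.trans (mem_colourClass.1 hev).2.symm)
  rw [← (Sym2.mem_and_mem_iff huv).1 ⟨heq ▸ hueu, hvev⟩]
  exact (mem_colourClass.1 hev).2

lemma card_colourSupport_inter_le_one {c c' : Fin k} (hinj : Set.InjOn Γ (adjacentEdges Γ c))
    (hinj' : Set.InjOn Γ (adjacentEdges Γ c')) (hcc' : c ≠ c') :
    #(colourSupport Γ c ∩ colourSupport Γ c') ≤ 1 := by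
  refine card_le_one.2 fun u hu v hv => ?_
  by_contra huv
  have h := eq_of_mem_colourSupport_inter hinj hcc' huv hu hv
  rw [inter_comm] at hu hv
  exact hcc' (eq_of_mem_colourSupport_inter hinj' hcc'.symm huv hu hv ▸ h)

namespace IsCompleteEdgeColouring

lemma colourSupport_inter_nonempty (hΓ : IsCompleteEdgeColouring Γ) {c c' : Fin k}
    (hcc' : c ≠ c') :
    (colourSupport Γ c ∩ colourSupport Γ c').Nonempty := by
  obtain ⟨p, y, z, hpy, hpz, hy, hz⟩ := hΓ.2 c c' hcc'
  exact ⟨p, mem_inter.2 ⟨left_mem_colourSupport hpy hy, left_mem_colourSupport hpz hz⟩⟩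

lemma surjOn_adjacentEdges (hΓ : IsCompleteEdgeColouring Γ) (c : Fin k) :
    Set.SurjOn Γ (adjacentEdges Γ c) (univ.erase c) := by
  intro c' hc'
  obtain ⟨p, y, z, hpy, hpz, hy, hz⟩ := hΓ.2 c c' (mem_erase.1 hc').1.symm
  refine ⟨s(p, z), ?_, hz⟩
  exact mem_adjacentEdges.2 ⟨by simpa using hpz,
    ⟨p, left_mem_colourSupport hpy hy, Sym2.mem_mk_left p z⟩, hz ▸ (mem_erase.1 hc').1⟩

lemma sub_one_le_card_adjacentEdges (hΓ : IsCompleteEdgeColouring Γ) (c : Fin k) :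
    k - 1 ≤ #(adjacentEdges Γ c) := by
  simpa using card_le_card_of_surjOn Γ (hΓ.surjOn_adjacentEdges c)

lemma injOn_adjacentEdges (hΓ : IsCompleteEdgeColouring Γ) {c : Fin k}
    (h : #(adjacentEdges Γ c) ≤ k - 1) :
    Set.InjOn Γ (adjacentEdges Γ c) :=
  injOn_of_surjOn_of_card_le Γ (fun _ he => mem_erase.2 ⟨(mem_adjacentEdges.1 he).2.2, mem_univ _⟩)
    (hΓ.surjOn_adjacentEdges c) (by simpa using h)

end IsCompleteEdgeColouring

end Colouring

lemma IsCompleteEdgeColouring.clamp {m k j : ℕ} {Γ : Sym2 (Fin m) → Fin k}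
    (hΓ : IsCompleteEdgeColouring Γ) (hj : j < k) :
    IsCompleteEdgeColouring fun e => Fin.clamp (Γ e) j := by
  have hclamp (c : Fin (j + 1)) : Fin.clamp (Fin.castLE hj c) j = c :=
    Fin.ext (by simp [Fin.coe_clamp]; omega)
  refine ⟨fun c => ?_, fun c₁ c₂ hc => ?_⟩
  · obtain ⟨x, y, hxy, hc⟩ := hΓ.1 (Fin.castLE hj c)
    exact ⟨x, y, hxy, by simp only [hc, hclamp]⟩
  · obtain ⟨x, y, z, hxy, hxz, h₁, h₂⟩ :=
      hΓ.2 (Fin.castLE hj c₁) (Fin.castLE hj c₂) (by simpa using hc)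
    exact ⟨x, y, z, hxy, hxz, by simp only [h₁, hclamp], by simp only [h₂, hclamp]⟩

lemma pseudoachromaticIndex_le {m K : ℕ}
    (h : ∀ Γ : Sym2 (Fin m) → Fin (K + 1), ¬ IsCompleteEdgeColouring Γ) :
    pseudoachromaticIndex m ≤ K :=
  csSup_le' fun _ ⟨_, hΓ⟩ => not_lt.1 fun hk => h _ (hΓ.clamp hk)

theorem not_isCompleteEdgeColouring {x m : ℕ} (hx : 2 ≤ x) (h1 : 4 * x ^ 2 - x ≤ m)
    (h2 : m ≤ 4 * x ^ 2 + 3 * x - 3) (Γ : Sym2 (Fin m) → Fin (2 * x * (m - x - 1) + 1)) :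
    ¬ IsCompleteEdgeColouring Γ := by
  intro hΓ
  have hm : 3 * x ≤ m := by
    have : x ≤ x ^ 2 := by nlinarith
    omega
  have hchoose := choose_two_eq_of_two_mul_le (show 2 * x ≤ m by omega)
  have hcolour (c) : x ≤ #(colourClass Γ c) ∧
      (#(colourClass Γ c) = x → #(colourSupport Γ c) = 2 * x) := by
    refine le_and_eq_of_add_choose_two_le hm (card_colourSupport_le Γ c) ?_
    have := hΓ.sub_one_le_card_adjacentEdges c
    have := card_adjacentEdges_add Γ c
    omega
  set F : Finset (Fin (2 * x * (m - x - 1) + 1)) := {c | #(colourClass Γ c) = x}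
  have hsupp : ∀ c ∈ F, #(colourSupport Γ c) = 2 * x := fun c hc =>
    (hcolour c).2 (mem_filter.1 hc).2
  have hinj : ∀ c ∈ F, Set.InjOn Γ (adjacentEdges Γ c) := fun c hc =>
    hΓ.injOn_adjacentEdges (by
      have := card_adjacentEdges_add Γ c
      rw [(mem_filter.1 hc).2, hsupp c hc] at this
      omega)
  have hinter : ∀ c ∈ F, ∀ c' ∈ F, c ≠ c' → #(colourSupport Γ c ∩ colourSupport Γ c') = 1 :=
    fun c hc c' hc' hcc' => le_antisymm
      (card_colourSupport_inter_le_one (hinj c hc) (hinj c' hc') hcc')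
      (hΓ.colourSupport_inter_nonempty hcc').card_pos
  have hFcard : 2 * x * (2 * x - 1) + 1 < #F := by
    refine lt_of_succ_mul_le_choose_two_add hx h1 h2 ?_
    have := mul_card_le_sum_add_card_filter_eq univ (fun c => #(colourClass Γ c))
      (fun c _ => (hcolour c).1)
    rwa [sum_card_colourClass, card_univ, Fintype.card_fin] at this
  have hsun := card_mul_pred_le_of_pairwise_card_inter_eq_one hsupp hinter hFcard
  rw [Fintype.card_fin] at hsun
  have := (Nat.mul_le_mul_right (2 * x - 1) hFcard).trans hsun
  zify [show 1 ≤ 2 * x by omega, show 3 ≤ 4 * x ^ 2 + 3 * x by nlinarith] at this h2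
  nlinarith

theorem stmt_1 (x m : ℕ) (hx : 2 ≤ x)
    (h1 : 4 * x ^ 2 - x ≤ m) (h2 : m ≤ 4 * x ^ 2 + 3 * x - 3) :
    pseudoachromaticIndex m ≤ 2 * x * (m - x - 1) ∧
    ¬ ∃ Γ : Sym2 (Fin m) → Fin (2 * x * (m - x - 1) + 1), IsCompleteEdgeColouring Γ := by
  have h := not_isCompleteEdgeColouring hx h1 h2
  exact ⟨pseudoachromaticIndex_le h, fun ⟨Γ, hΓ⟩ => h Γ hΓ⟩
end

section
/- Let q be a natural number, n = q² + q + 1, and t a positive integer. Let V be a vertex set of size n + t, let S ⊆ V with |S| = n, and let l₁, …, l_n ⊆ S be sets ('lines') each of size q + 1 such that any two distinct lines intersect in exactly one point and the edge sets of the complete graphs induced on the l_i partition the edges of the complete graph on S. Let Γ be an edge-colouring of the complete graph on V with colour set 𝒞, and for each i let 𝒞_i ⊆ 𝒞 be a set of colours such that every vertex x ∈ l_i is an owner of 𝒞_i. Then for every pair of colours c₁, c₂ ∈ ⋃_{i=1}^{n} 𝒞_i there exists a vertex x ∈ S that is an owner of both c₁ and c₂. -/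
/-- Given an edge-colouring `Γ` of the complete graph on `V`, a vertex `x` is an
*owner* of a colour `c` if some edge at `x` has colour `c`. -/
def IsOwner {V C : Type*} (Γ : Sym2 V → C) (x : V) (c : C) : Prop :=
  ∃ y : V, y ≠ x ∧ Γ s(x, y) = c

theorem stmt_5 (q n t : ℕ) (hn : n = q ^ 2 + q + 1) (ht : 0 < t)
    (V : Type*) [Fintype V] [DecidableEq V] (hV : Fintype.card V = n + t)
    (S : Finset V) (hS : S.card = n)
    (l : Fin n → Finset V)
    (hlS : ∀ i, l i ⊆ S)
    (hlcard : ∀ i, (l i).card = q + 1)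
    (hmeet : ∀ i j, i ≠ j → (l i ∩ l j).card = 1)
    (hpart : ∀ x ∈ S, ∀ y ∈ S, x ≠ y → ∃! i, x ∈ l i ∧ y ∈ l i)
    (C : Type*) (Γ : Sym2 V → C) (Cs : Fin n → Set C)
    (hown : ∀ i, ∀ x ∈ l i, ∀ c ∈ Cs i, IsOwner Γ x c)
    (c₁ c₂ : C) (hc₁ : ∃ i, c₁ ∈ Cs i) (hc₂ : ∃ i, c₂ ∈ Cs i) :
    ∃ x ∈ S, IsOwner Γ x c₁ ∧ IsOwner Γ x c₂ := by
  obtain ⟨i, hi⟩ := hc₁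
  obtain ⟨j, hj⟩ := hc₂
  by_cases hij : i = j
  · subst hij
    have : (l i).Nonempty := by
      rw [← Finset.card_pos, hlcard]; omega
    obtain ⟨x, hx⟩ := this
    exact ⟨x, hlS i hx, hown i x hx c₁ hi, hown i x hx c₂ hj⟩
  · have h1 := hmeet i j hij
    have : (l i ∩ l j).Nonempty := by
      rw [← Finset.card_pos, h1]; omega
    obtain ⟨x, hx⟩ := this
    rw [Finset.mem_inter] at hx
    exact ⟨x, hlS i hx.1, hown i x hx.1 c₁ hi, hown j x hx.2 c₂ hj⟩
end

section
/- Let q be an even natural number, let a be an integer with 0 ≤ a ≤ q/2 + 1, and set m_a = (q+1)² − a. Then ⌊(m_a(m_a − 1)/2)/(q/2 + 1)⌋ = (m_a − a)q + ⌊(a(a−1)/2)/(q/2 + 1)⌋, i.e. ⌊(m_a(m_a − 1)/2)/(q/2 + 1)⌋ = (m_a − a)q + ⌊(a² − a)/(q + 2)⌋. -/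
theorem stmt_12 (q a : ℕ) (hq : Even q) (ha : a ≤ q / 2 + 1)
    (m : ℕ) (hm : m = (q + 1) ^ 2 - a) :
    (m * (m - 1) / 2) / (q / 2 + 1) = (m - a) * q + (a * (a - 1) / 2) / (q / 2 + 1) ∧
    (m * (m - 1) / 2) / (q / 2 + 1) = (m - a) * q + (a ^ 2 - a) / (q + 2) := by
  obtain ⟨k, hk⟩ := hq
  subst hk
  have hq2 : (k + k) / 2 = k := by omega
  rcases Nat.eq_zero_or_pos k with hk0 | hk0
  · subst hk0 hm
    interval_cases a <;> decide
  have haq : a ≤ (k + k + 1) ^ 2 := by nlinarith [ha, hq2]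
  have ham : a ≤ m := by
    subst hm
    have ha' : a ≤ k + 1 := by omega
    have hx : (k + k + 1) ^ 2 = 4 * (k * k) + 4 * k + 1 := by ring
    have : a + a ≤ (k + k + 1) ^ 2 := by omega
    omega
  have hm' : (m : ℤ) = ((k : ℤ) + k + 1) ^ 2 - a := by
    subst hm
    push_cast [haq]
    ring
  -- key identity
  have key : m ^ 2 - m = (a ^ 2 - a) + ((m - a) * (k + k)) * (k + 1) * 2 := by
    have h1 : a ≤ a ^ 2 := by nlinarith
    have h2 : m ≤ m ^ 2 := by nlinarith
    zify [h1, h2, ham]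
    rw [hm']
    ring
  have hmm : m * (m - 1) = m ^ 2 - m := by
    rw [Nat.mul_sub, mul_one, ← pow_two]
  have haa : a * (a - 1) = a ^ 2 - a := by
    rw [Nat.mul_sub, mul_one, ← pow_two]
  have hdiv2 : m * (m - 1) / 2 = (a ^ 2 - a) / 2 + (m - a) * (k + k) * (k + 1) := by
    rw [hmm, key]
    rw [Nat.add_mul_div_right _ _ (by norm_num : (0:ℕ) < 2)]
  have hdivk : m * (m - 1) / 2 / (k + 1)
      = (a ^ 2 - a) / 2 / (k + 1) + (m - a) * (k + k) := by
    rw [hdiv2, Nat.add_mul_div_right _ _ (by omega : (0:ℕ) < k + 1)]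
  rw [hq2]
  constructor
  · rw [hdivk, haa]; ring
  · rw [hdivk, Nat.div_div_eq_div_mul]
    rw [show 2 * (k + 1) = k + k + 2 from by ring]
    omega
end
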